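/- arXiv:2103.15334 — 3 statements merged into one kernel-verified Lean document; each statement's English description precedes it below -/
import Mathlib

section
/- For any nonnegative integer q and complex numbers x₀, ..., x_q, the identity ∫₀¹ a^q e[a x₀, a x₁, ..., a x_q] da = e[0, x₀, x₁, ..., x_q] holds, where e[·] denotes the divided difference of the exponential function. -/
open scoped BigOperators

/-- Divided difference of the exponential function at `q+1` complex points,
given via its power-series expansion. -/
noncomputable def expDD {q : ℕ} (x : Fin (q + 1) → ℂ) : ℂ :=
  ∑' k : Fin (q + 1) → ℕ, (∏ j, x j ^ k j) / ((Nat.factorial (q + ∑ j, k j) : ℂ))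

/-!
Scaling the nodes by `a` turns the power series of `a ^ q * e[a x]` into
`∑ₖ a ^ (q + |k|) xᵏ / (q + |k|)!`, which converges absolutely and uniformly on `[0, 1]`.
Integrating term by term gives `∑ₖ xᵏ / (q + |k| + 1)!`, and this is the series of
`e[0, x]`: a node `0` only contributes the terms with exponent `0` on it.
-/

open MeasureTheory Finset

theorem summable_prod_pow_div_factorial {m : ℕ} (r : Fin m → ℝ) (hr : ∀ j, 0 ≤ r j) :
    Summable fun k : Fin m → ℕ => ∏ j, r j ^ k j / (k j).factorial := by
  induction m with
  | zero => exact .of_finite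
  | succ m ih =>
    rw [← (Fin.consEquiv fun _ => ℕ).summable_iff]
    have hterm : ∀ j n, 0 ≤ r j ^ n / (n.factorial : ℝ) :=
      fun j n => div_nonneg (pow_nonneg (hr j) n) (Nat.cast_nonneg _)
    refine ((Real.summable_pow_div_factorial (r 0)).mul_of_nonneg
      (ih (r ∘ Fin.succ) fun j => hr _) (hterm 0)
      (fun _ => prod_nonneg fun j _ => hterm j.succ _)).congr fun p => ?_
    simp [Fin.prod_univ_succ, prod_div_distrib, mul_div_mul_comm]

theorem summable_norm_prod_pow_div_factorial_add_sum {m : ℕ} (q : ℕ) (x : Fin m → ℂ) :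
    Summable fun k : Fin m → ℕ => ‖(∏ j, x j ^ k j) / ((q + ∑ j, k j).factorial : ℂ)‖ := by
  refine (summable_prod_pow_div_factorial (‖x ·‖) fun j => norm_nonneg _).of_nonneg_of_le
    (fun _ => norm_nonneg _) fun k => ?_
  have hdvd : ∏ j, (k j).factorial ∣ (q + ∑ j, k j).factorial :=
    (Nat.prod_factorial_dvd_factorial_sum _ _).trans
      (Nat.factorial_dvd_factorial (Nat.le_add_left _ _))
  have hle : ((∏ j, (k j).factorial : ℕ) : ℝ) ≤ (q + ∑ j, k j).factorial :=
    mod_cast Nat.le_of_dvd (Nat.factorial_pos _) hdvd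
  rw [prod_div_distrib, norm_div, norm_prod, Complex.norm_natCast]
  simp only [norm_pow]
  push_cast at hle
  gcongr

theorem integral_ofReal_pow_mul (n : ℕ) (c : ℂ) :
    ∫ t in (0 : ℝ)..1, (t : ℂ) ^ n * c = c / (n + 1) := by
  have hpow : ∫ t in (0 : ℝ)..1, (t : ℂ) ^ n = ((∫ t in (0 : ℝ)..1, t ^ n : ℝ) : ℂ) := by
    rw [← intervalIntegral.integral_ofReal]; push_cast; rfl
  rw [intervalIntegral.integral_mul_const, hpow, integral_pow]
  push_cast
  ring

theorem hasSum_integral_pow_mul {ι : Type*} [Countable ι] (n : ι → ℕ) {c : ι → ℂ}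
    (hc : Summable fun i => ‖c i‖) :
    HasSum (fun i => c i / (n i + 1)) (∫ t in (0 : ℝ)..1, ∑' i, (t : ℂ) ^ n i * c i) := by
  have hbound : ∀ i, ∀ t ∈ Set.uIoc (0 : ℝ) 1, ‖(t : ℂ) ^ n i * c i‖ ≤ ‖c i‖ := by
    intro i t ht
    rw [Set.uIoc_of_le zero_le_one] at ht
    rw [norm_mul, norm_pow, Complex.norm_real, Real.norm_of_nonneg ht.1.le]
    exact mul_le_of_le_one_left (norm_nonneg _) (pow_le_one₀ ht.1.le ht.2)
  have := intervalIntegral.hasSum_integral_of_dominated_convergence (μ := volume) (fun i _ => ‖c i‖)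
    (fun i => (by fun_prop : Continuous fun t : ℝ => (t : ℂ) ^ n i * c i).aestronglyMeasurable)
    (fun i => ae_of_all _ (hbound i)) (ae_of_all _ fun _ _ => hc) intervalIntegrable_const
    (ae_of_all _ fun t ht => (hc.of_norm_bounded fun i => hbound i t ht).hasSum)
  simpa only [integral_ofReal_pow_mul] using this

theorem pow_mul_expDD_mul {q : ℕ} (a : ℂ) (x : Fin (q + 1) → ℂ) :
    a ^ q * expDD (fun j => a * x j) =
      ∑' k : Fin (q + 1) → ℕ, a ^ (q + ∑ j, k j) *
        ((∏ j, x j ^ k j) / ((q + ∑ j, k j).factorial : ℂ)) := by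
  rw [expDD, ← tsum_mul_left]
  congr 1 with k
  simp only [mul_pow, prod_mul_distrib, prod_pow_eq_pow_sum, pow_add]
  ring

theorem expDD_cons_zero {q : ℕ} (x : Fin (q + 1) → ℂ) :
    expDD (Fin.cons 0 x) =
      ∑' k : Fin (q + 1) → ℕ, (∏ j, x j ^ k j) / ((q + ∑ j, k j + 1).factorial : ℂ) := by
  rw [expDD, ← (Fin.cons_right_injective (0 : ℕ)).tsum_eq]
  · congr 1 with k
    simp only [Fin.prod_univ_succ, Fin.sum_univ_succ, Fin.cons_zero, Fin.cons_succ, pow_zero,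
      one_mul, zero_add]
    ring_nf
  · intro k hk
    have hk0 : k 0 = 0 := by
      by_contra h
      exact hk (by simp [Fin.prod_univ_succ, zero_pow h])
    exact ⟨Fin.tail k, by rw [← hk0, Fin.cons_self_tail]⟩

theorem div_factorial_div_succ (z : ℂ) (n : ℕ) :
    z / n.factorial / (n + 1) = z / (n + 1).factorial := by
  rw [Nat.factorial_succ, div_div, mul_comm]
  push_cast
  rfl

/-- `∫₀¹ a^q e[a x₀, a x₁, ..., a x_q] da = e[0, x₀, x₁, ..., x_q]`. -/
theorem expDD_integral_scaling (q : ℕ) (x : Fin (q + 1) → ℂ) :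
    (∫ a in (0:ℝ)..1, (a : ℂ) ^ q * expDD (fun j => (a : ℂ) * x j)) =
      expDD (Fin.cons 0 x) := by
  simp_rw [pow_mul_expDD_mul]
  rw [expDD_cons_zero, ← (hasSum_integral_pow_mul _
    (summable_norm_prod_pow_div_factorial_add_sum q x)).tsum_eq]
  simp only [div_factorial_div_succ]
end

section
/- For f(x) = e^{tx} with t real and complex points x₀, ..., x_q, writing e^{t[x₀,...,x_q]} for the divided difference f[x₀,...,x_q], one has for any real τ: ∫₀^τ e^{t[x₀,...,x_q]} dt = e^{τ[0, x₀, ..., x_q]}. -/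
open scoped BigOperators

/-- `e^{t[x₀,...,x_q]}`: the divided difference of `x ↦ e^{t x}` at `x₀,...,x_q`,
via the identity `e^{t[x₀,...,x_q]} = t^q e[t x₀, ..., t x_q]`. -/
noncomputable def expDDt {q : ℕ} (t : ℝ) (x : Fin (q + 1) → ℂ) : ℂ :=
  (t : ℂ) ^ q * expDD (fun j => (t : ℂ) * x j)

/-!
Both sides are power series in the points: expanding `e^{t x_j}`,
`e^{t[x₀,...,x_q]} = ∑_k t^{q+|k|} x^k / (q+|k|)!`, summed over multi-indices `k ∈ ℕ^{q+1}`.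
Integrating termwise from `0` to `τ` raises `q` to `q + 1`, which is the same series for the
points `0, x₀, ..., x_q`, because a monomial involving the point `0` vanishes. Termwise
integration is justified by dominated convergence, using
`|t|^{q+|k|} / (q+|k|)! ≤ |τ|^{q+|k|} / ∏ k_j!`, whose sum over `k` is `|τ|^q e^{|τ| ∑ ‖x_j‖}`.
-/

open Finset Nat

lemma summable_fin_pi_prod {β : Type*} :
    ∀ {m : ℕ} (g : Fin m → β → ℝ), (∀ j, 0 ≤ g j) → (∀ j, Summable (g j)) →
      Summable fun k : Fin m → β => ∏ j, g j (k j)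
  | 0, _, _, _ => .of_finite
  | m + 1, g, hg, hsum => by
    have htail : Summable fun k : Fin m → β => ∏ j, g j.succ (k j) :=
      summable_fin_pi_prod (fun j => g j.succ) (fun j => hg _) (fun j => hsum _)
    rw [← (Fin.consEquiv fun _ => β).summable_iff]
    convert (hsum 0).mul_of_nonneg htail (hg 0) fun k => prod_nonneg fun j _ => hg _ _ with p
    simp [Fin.consEquiv, Fin.prod_univ_succ]

lemma tsum_eq_tsum_fin_cons_zero {α β : Type*} [AddCommMonoid α] [TopologicalSpace α] [Zero β]
    {m : ℕ} (f : (Fin (m + 1) → β) → α) (hf : ∀ k, k 0 ≠ 0 → f k = 0) :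
    ∑' k, f k = ∑' k, f (Fin.cons 0 k) := by
  refine ((Fin.cons_right_injective (α := fun _ => β) 0).tsum_eq fun k hk => ?_).symm
  have hk0 : k 0 = 0 := not_not.mp fun h => hk (hf k h)
  exact ⟨Fin.tail k, by rw [← hk0, Fin.cons_self_tail]⟩

noncomputable def expDDtTerm (n : ℕ) {m : ℕ} (x : Fin m → ℂ) (t : ℝ) (k : Fin m → ℕ) : ℂ :=
  (t : ℂ) ^ (n + ∑ j, k j) * (∏ j, x j ^ k j) / (n + ∑ j, k j)!

lemma norm_expDDtTerm_le (n : ℕ) {m : ℕ} (x : Fin m → ℂ) {t R : ℝ} (h : |t| ≤ R)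
    (k : Fin m → ℕ) :
    ‖expDDtTerm n x t k‖ ≤ R ^ n * ∏ j, (R * ‖x j‖) ^ k j / (k j)! := by
  have hR : 0 ≤ R := (abs_nonneg t).trans h
  set N := n + ∑ j, k j
  set P := ∏ j, ‖x j‖ ^ k j
  have hP : 0 ≤ P := prod_nonneg fun j _ => by positivity
  have hfact : (∏ j, ((k j)! : ℝ)) ≤ N ! := by
    rw [← Nat.cast_prod]
    exact_mod_cast Nat.le_of_dvd (factorial_pos _)
      ((prod_factorial_dvd_factorial_sum _ _).trans (factorial_dvd_factorial (le_add_left _ _)))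
  calc ‖expDDtTerm n x t k‖ = |t| ^ N * P / N ! := by
        simp [expDDtTerm, N, P, norm_prod]
    _ ≤ R ^ N * P / ∏ j, ((k j)! : ℝ) := by gcongr
    _ = R ^ n * ∏ j, (R * ‖x j‖) ^ k j / (k j)! := by
        simp only [N, P, prod_div_distrib, mul_pow, prod_mul_distrib, prod_pow_eq_pow_sum, pow_add]
        ring

lemma summable_expDDtTerm_bound (n : ℕ) {m : ℕ} (x : Fin m → ℂ) {R : ℝ} (hR : 0 ≤ R) :
    Summable fun k : Fin m → ℕ => R ^ n * ∏ j, (R * ‖x j‖) ^ k j / (k j)! :=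
  (summable_fin_pi_prod (fun j i => (R * ‖x j‖) ^ i / i !) (fun j i => by positivity)
    fun j => Real.summable_pow_div_factorial _).mul_left _

lemma summable_expDDtTerm (n : ℕ) {m : ℕ} (x : Fin m → ℂ) (t : ℝ) :
    Summable (expDDtTerm n x t) :=
  (summable_expDDtTerm_bound n x (abs_nonneg t)).of_norm_bounded
    (norm_expDDtTerm_le n x le_rfl)

lemma expDDt_eq_tsum {q : ℕ} (t : ℝ) (x : Fin (q + 1) → ℂ) :
    expDDt t x = ∑' k, expDDtTerm q x t k := by
  rw [expDDt, expDD, ← tsum_mul_left]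
  refine tsum_congr fun k => ?_
  simp only [expDDtTerm, mul_pow, prod_mul_distrib, prod_pow_eq_pow_sum, pow_add]
  ring

lemma hasSum_expDDtTerm {q : ℕ} (t : ℝ) (x : Fin (q + 1) → ℂ) :
    HasSum (expDDtTerm q x t) (expDDt t x) :=
  expDDt_eq_tsum t x ▸ (summable_expDDtTerm q x t).hasSum

lemma expDDt_cons_zero_eq_tsum {q : ℕ} (τ : ℝ) (x : Fin (q + 1) → ℂ) :
    expDDt τ (Fin.cons 0 x) = ∑' k, expDDtTerm (q + 1) x τ k := by
  rw [expDDt_eq_tsum, tsum_eq_tsum_fin_cons_zero]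
  · refine tsum_congr fun k => ?_
    simp only [expDDtTerm, Fin.sum_cons, Fin.prod_univ_succ, Fin.cons_zero, Fin.cons_succ,
      pow_zero, one_mul, zero_add, add_assoc]
  · intro k hk
    simp [expDDtTerm, Fin.prod_univ_succ, zero_pow hk]

lemma integral_ofReal_pow_div_factorial (n : ℕ) (τ : ℝ) :
    ∫ t in (0 : ℝ)..τ, (t : ℂ) ^ n / n ! = (τ : ℂ) ^ (n + 1) / (n + 1)! := by
  have hpow := intervalIntegral.integral_ofReal (f := fun t : ℝ => t ^ n) (a := 0) (b := τ)
    (μ := MeasureTheory.volume)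
  push_cast [integral_pow] at hpow
  rw [intervalIntegral.integral_div, hpow, factorial_succ]
  push_cast
  field_simp
  ring

lemma integral_expDDtTerm (n : ℕ) {m : ℕ} (x : Fin m → ℂ) (τ : ℝ) (k : Fin m → ℕ) :
    ∫ t in (0 : ℝ)..τ, expDDtTerm n x t k = expDDtTerm (n + 1) x τ k := by
  have hN : n + 1 + ∑ j, k j = n + ∑ j, k j + 1 := by omega
  simp only [expDDtTerm, mul_div_right_comm _ (∏ j, x j ^ k j), hN,
    intervalIntegral.integral_mul_const, integral_ofReal_pow_div_factorial]

lemma hasSum_integral_expDDtTerm {q : ℕ} (x : Fin (q + 1) → ℂ) (τ : ℝ) :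
    HasSum (fun k => ∫ t in (0 : ℝ)..τ, expDDtTerm q x t k) (∫ t in (0 : ℝ)..τ, expDDt t x) := by
  have habs : ∀ t ∈ Set.uIoc 0 τ, |t| ≤ |τ| := fun t ht => by
    simpa using Set.abs_sub_left_of_mem_uIcc (Set.uIoc_subset_uIcc ht)
  refine intervalIntegral.hasSum_integral_of_dominated_convergence
    (fun k _ => |τ| ^ q * ∏ j, (|τ| * ‖x j‖) ^ k j / (k j)!) (fun k => ?_)
    (fun k => .of_forall fun t ht => norm_expDDtTerm_le q x (habs t ht) k)
    (.of_forall fun _ _ => summable_expDDtTerm_bound q x (abs_nonneg τ))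
    intervalIntegrable_const (.of_forall fun t _ => hasSum_expDDtTerm t x)
  exact (((Complex.continuous_ofReal.pow _).mul continuous_const).div_const _).aestronglyMeasurable

/-- `∫₀^τ e^{t[x₀,...,x_q]} dt = e^{τ[0, x₀, ..., x_q]}`. -/
theorem expDDt_integral (q : ℕ) (x : Fin (q + 1) → ℂ) (τ : ℝ) :
    (∫ t in (0:ℝ)..τ, expDDt t x) = expDDt τ (Fin.cons 0 x) := by
  rw [← (hasSum_integral_expDDtTerm x τ).tsum_eq, expDDt_cons_zero_eq_tsum]
  exact tsum_congr fun k => integral_expDDtTerm q x τ k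
end

section
/- Let W be a unitary on ℋ_anc ⊗ ℋ with the property that for every state |ψ⟩, W|0⟩|ψ⟩ = (1/s)|0⟩Ũ|ψ⟩ + √(1 − 1/s²)|Φ_ψ⟩ where Ũ is unitary, s = 2, and (|0⟩⟨0| ⊗ I)|Φ_ψ⟩ = 0. Define P = |0⟩⟨0| ⊗ I, R = I − 2P, and A = −W R W† R W. Then A|0⟩|ψ⟩ = |0⟩Ũ|ψ⟩ for every |ψ⟩. -/
/-!
With `x = J ψ` and `a = J (Ũ ψ)`, the hypothesis on `W` says that the compression `J† W J` is
`Ũ / 2`; hence `P (W x) = a / 2`, and taking adjoints, `P (W† a) = x / 2`. With `R = 1 - 2P` this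
gives `R W x = W x - a`, then `W† R W x = x - W† a`, then `R W† R W x = -W† a`, and finally
`A x = W W† a = a`. Geometrically, `W` rotates by `θ = π/6` (`sin θ = 1/s = 1/2`) and one round of
amplification rotates by `3θ = π/2`.
-/

open ContinuousLinearMap

section Reflection

variable {R E : Type*} [CommRing R] [AddCommGroup E] [Module R E] [TopologicalSpace E]
  [IsTopologicalAddGroup E] [ContinuousConstSMul R E]

theorem neg_comp_reflection_comp_apply (P W W' : E →L[R] E) (hW'W : W' ∘L W = 1)
    (hWW' : W ∘L W' = 1) {x a : E} (hx : P x = x) (hWx : (2 : R) • P (W x) = a)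
    (hW'a : (2 : R) • P (W' a) = x) :
    (-(W ∘L (1 - (2 : R) • P) ∘L W' ∘L (1 - (2 : R) • P) ∘L W)) x = a := by
  have hRWx : (1 - (2 : R) • P) (W x) = W x - a := by
    rw [sub_apply, smul_apply, hWx, one_apply_eq_self]
  have hW'RWx : W' (W x - a) = x - W' a := by
    rw [map_sub, ← comp_apply, hW'W, one_apply_eq_self]
  have hRW'RWx : (1 - (2 : R) • P) (x - W' a) = -W' a := by
    rw [sub_apply, smul_apply, one_apply_eq_self, map_sub, smul_sub, hx, hW'a, two_smul]
    abel
  rw [neg_apply, comp_apply, comp_apply, comp_apply, comp_apply, hRWx, hW'RWx, hRW'RWx, map_neg,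
    ← comp_apply W, hWW', one_apply_eq_self, neg_neg]

end Reflection

section Compression

variable {𝕜 H K : Type*} [RCLike 𝕜] [NormedAddCommGroup H] [InnerProductSpace 𝕜 H]
  [CompleteSpace H] [NormedAddCommGroup K] [InnerProductSpace 𝕜 K] [CompleteSpace K]

theorem adjoint_comp_comp_eq_smul_of_apply_eq {J : H →L[𝕜] K} (hJ : adjoint J ∘L J = 1)
    {W : K →L[𝕜] K} {U : H →L[𝕜] H} {Φ : H → K} {c d : 𝕜}
    (hW : ∀ ψ, W (J ψ) = c • J (U ψ) + d • Φ ψ) (hΦ : ∀ ψ, (J ∘L adjoint J) (Φ ψ) = 0) :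
    adjoint J ∘L W ∘L J = c • U := by
  have hJJ (ψ : H) : adjoint J (J ψ) = ψ := by rw [← comp_apply, hJ, one_apply_eq_self]
  ext ψ
  have hJΦ : adjoint J (Φ ψ) = 0 := by
    rw [← hJJ (adjoint J (Φ ψ)), ← comp_apply J, hΦ, map_zero]
  simp only [comp_apply, hW, map_add, map_smul, hJJ, hJΦ, smul_zero, add_zero, smul_apply]

theorem two_smul_comp_adjoint_apply {J : H →L[𝕜] K} {T : K →L[𝕜] K} {V : H →L[𝕜] H}
    (h : adjoint J ∘L T ∘L J = (2 : 𝕜)⁻¹ • V) (ψ : H) :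
    (2 : 𝕜) • (J ∘L adjoint J) (T (J ψ)) = J (V ψ) := by
  have := congrArg (fun L => J (L ψ)) h
  simp only [comp_apply, smul_apply, map_smul] at this
  rw [comp_apply, this, smul_inv_smul₀ two_ne_zero]

theorem adjoint_comp_adjoint_comp_eq_of_eq_inv_two_smul {J : H →L[𝕜] K} {T : K →L[𝕜] K}
    {V : H →L[𝕜] H} (h : adjoint J ∘L T ∘L J = (2 : 𝕜)⁻¹ • V) :
    adjoint J ∘L adjoint T ∘L J = (2 : 𝕜)⁻¹ • adjoint V := by
  have := congrArg adjoint h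
  rwa [adjoint_comp, adjoint_comp, adjoint_adjoint, ← star_eq_adjoint (_ • V), star_smul,
    star_inv₀, star_ofNat, star_eq_adjoint, comp_assoc] at this

end Compression

/-- The composite space `ℋ_anc ⊗ ℋ` is modeled by `K` together with the isometric embedding
`J : ψ ↦ |0⟩ ⊗ ψ`, so that `P = |0⟩⟨0| ⊗ I` is `J ∘ J†`. -/
theorem oblivious_amplitude_amplification
    {H K : Type*} [NormedAddCommGroup H] [InnerProductSpace ℂ H]
    [FiniteDimensional ℂ H]
    [NormedAddCommGroup K] [InnerProductSpace ℂ K] [FiniteDimensional ℂ K]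
    (J : H →L[ℂ] K) (hJ : adjoint J ∘L J = 1)
    (W : K →L[ℂ] K) (hW : W ∈ unitary (K →L[ℂ] K))
    (Utilde : H →L[ℂ] H) (hUt : Utilde ∈ unitary (H →L[ℂ] H))
    (Φ : H → K)
    (hact : ∀ ψ : H, W (J ψ) =
      ((2 : ℂ)⁻¹) • J (Utilde ψ) +
        ((Real.sqrt (1 - ((2 : ℝ)⁻¹) ^ 2) : ℝ) : ℂ) • Φ ψ)
    (hΦ : ∀ ψ : H, (J ∘L adjoint J) (Φ ψ) = 0) :
    ∀ ψ : H,
      (-(W ∘L (1 - (2 : ℂ) • (J ∘L adjoint J)) ∘L adjoint W ∘L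
          (1 - (2 : ℂ) • (J ∘L adjoint J)) ∘L W)) (J ψ) = J (Utilde ψ) := by
  intro ψ
  have hWJ : adjoint J ∘L W ∘L J = (2 : ℂ)⁻¹ • Utilde :=
    adjoint_comp_comp_eq_smul_of_apply_eq hJ hact hΦ
  have hUU : adjoint Utilde (Utilde ψ) = ψ := by
    rw [← comp_apply, ← star_eq_adjoint, ← mul_def, Unitary.star_mul_self_of_mem hUt,
      one_apply_eq_self]
  refine neg_comp_reflection_comp_apply _ _ _ ?_ ?_ ?_ (two_smul_comp_adjoint_apply hWJ ψ) ?_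
  · rw [← star_eq_adjoint, ← mul_def, Unitary.star_mul_self_of_mem hW]
  · rw [← star_eq_adjoint, ← mul_def, Unitary.mul_star_self_of_mem hW]
  · rw [comp_apply, ← comp_apply (adjoint J), hJ, one_apply_eq_self]
  · rw [two_smul_comp_adjoint_apply (adjoint_comp_adjoint_comp_eq_of_eq_inv_two_smul hWJ), hUU]
end
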